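/- arXiv:2511.00138 — 4 statements merged into one kernel-verified Lean document; each statement's English description precedes it below -/
import Mathlib

section
/- Assume R₀ > 1, ε ∈ [0,1], u, q > 0, and c > 0 with 1 - 1/R₁ < c/(1+q) < 1 - 1/R₀, where R₁ = (1 - (u/(1+u))·((1+εq)/(1+q)))·R₀ and R₁ > 0. Then x* := ((1+u)/u)·((1+q)/(1+εq))·(1 - 1/(R₀(1 - c/(1+q)))) satisfies 0 < x* < 1. -/
/-! Writing `k = (u/(1+u))·((1+εq)/(1+q))`, so that `R₁ = (1-k)R₀`, and `m = R₀(1 - c/(1+q))`,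
the equilibrium is `x* = (1 - 1/m)/k`. The upper bound `c/(1+q) < 1 - 1/R₀` says `m > 1`, which
makes `x*` positive; the lower bound `1 - 1/R₁ < c/(1+q)` says `(1-k)m < 1`, i.e. `1 - 1/m < k`,
which is `x* < 1`. -/

lemma one_lt_mul_one_sub_of_lt_one_sub_inv {R a : ℝ} (hR : 0 < R) (h : a < 1 - 1 / R) :
    1 < R * (1 - a) := by
  have h' : 1 / R < 1 - a := by linarith
  rw [div_lt_iff₀ hR] at h'
  linarith

lemma mul_one_sub_lt_one_of_one_sub_inv_lt {S a : ℝ} (hS : 0 < S) (h : 1 - 1 / S < a) :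
    S * (1 - a) < 1 := by
  have h' : 1 - a < 1 / S := by linarith
  rw [lt_div_iff₀ hS] at h'
  linarith

lemma one_div_mul_one_sub_one_div_mem_Ioo {k m : ℝ} (hk : 0 < k) (hm : 1 < m)
    (hkm : (1 - k) * m < 1) : 0 < 1 / k * (1 - 1 / m) ∧ 1 / k * (1 - 1 / m) < 1 := by
  have hm₀ : 0 < m := by linarith
  have hinv_lt_one : 1 / m < 1 := (div_lt_one hm₀).mpr hm
  have hsub_lt : 1 - k < 1 / m := (lt_div_iff₀ hm₀).mpr hkm
  refine ⟨mul_pos (by positivity) (by linarith), ?_⟩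
  rw [one_div_mul_eq_div, div_lt_one hk]
  linarith

theorem stmt_4_general (R₀ ε u q c : ℝ) (hR₀ : 1 < R₀) (hε0 : 0 ≤ ε)
    (hu : 0 < u) (hq : 0 < q)
    (hR₁pos : 0 < (1 - (u / (1 + u)) * ((1 + ε * q) / (1 + q))) * R₀)
    (hlow : 1 - 1 / ((1 - (u / (1 + u)) * ((1 + ε * q) / (1 + q))) * R₀) < c / (1 + q))
    (hhigh : c / (1 + q) < 1 - 1 / R₀) :
    0 < ((1 + u) / u) * ((1 + q) / (1 + ε * q)) * (1 - 1 / (R₀ * (1 - c / (1 + q)))) ∧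
    ((1 + u) / u) * ((1 + q) / (1 + ε * q)) * (1 - 1 / (R₀ * (1 - c / (1 + q)))) < 1 := by
  set a := c / (1 + q)
  set k := (u / (1 + u)) * ((1 + ε * q) / (1 + q)) with hk
  have hεq : 0 < 1 + ε * q := by positivity
  have hk_pos : 0 < k := by positivity
  have hprefactor : ((1 + u) / u) * ((1 + q) / (1 + ε * q)) = 1 / k := by
    rw [hk]
    field_simp
  have hm : 1 < R₀ * (1 - a) :=
    one_lt_mul_one_sub_of_lt_one_sub_inv (by linarith) hhigh
  have hkm : (1 - k) * (R₀ * (1 - a)) < 1 := by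
    rw [← mul_assoc]
    exact mul_one_sub_lt_one_of_one_sub_inv_lt hR₁pos hlow
  rw [hprefactor]
  exact one_div_mul_one_sub_one_div_mem_Ioo hk_pos hm hkm

/-- Under the EPC existence condition `1 - 1/R₁ < c/(1+q) < 1 - 1/R₀` (with
`R₀ > 1`, `ε ∈ [0,1]`, `u, q, c > 0`, `R₁ > 0`), the equilibrium compliance
`x* = ((1+u)/u)·((1+q)/(1+εq))·(1 - 1/(R₀(1 - c/(1+q))))` lies in `(0,1)`. -/
theorem stmt_4 (R₀ ε u q c : ℝ) (hR₀ : 1 < R₀) (hε0 : 0 ≤ ε) (hε1 : ε ≤ 1)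
    (hu : 0 < u) (hq : 0 < q) (hc : 0 < c)
    (hR₁pos : 0 < (1 - (u / (1 + u)) * ((1 + ε * q) / (1 + q))) * R₀)
    (hlow : 1 - 1 / ((1 - (u / (1 + u)) * ((1 + ε * q) / (1 + q))) * R₀) < c / (1 + q))
    (hhigh : c / (1 + q) < 1 - 1 / R₀) :
    0 < ((1 + u) / u) * ((1 + q) / (1 + ε * q)) * (1 - 1 / (R₀ * (1 - c / (1 + q)))) ∧
    ((1 + u) / u) * ((1 + q) / (1 + ε * q)) * (1 - 1 / (R₀ * (1 - c / (1 + q)))) < 1 :=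
  stmt_4_general R₀ ε u q c hR₀ hε0 hu hq hR₁pos hlow hhigh
end

section
/- Fix R₀ > 1, u > 0, ε ∈ [0,1). The value of q at which the EPC and EFC regimes meet, i.e. where c/(1+q) = 1 - 1/R₁(q), minimizes the piecewise equilibrium prevalence I*(q) defined as min over regimes: I*(q) = 1 - 1/R₁(q) when c/(1+q) ≤ 1 - 1/R₁(q) (EFC stable), I*(q) = c/(1+q) when 1 - 1/R₁(q) < c/(1+q) < 1 - 1/R₀ (EPC), and I*(q) = 1 - 1/R₀ when c/(1+q) ≥ 1 - 1/R₀ (ENC). More precisely, I*(q) is nonincreasing on the EPC region and nondecreasing on the EFC region, so any crossover point q* satisfying c/(1+q*) = 1 - 1/R₁(q*) is a global minimizer of I* restricted to the union of the EPC and EFC regions. -/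
/-- Effective reproduction number under full compliance. -/
noncomputable def R1 (R₀ u ε q : ℝ) : ℝ :=
  (1 - (u / (1 + u)) * ((1 + ε * q) / (1 + q))) * R₀

/-- The EPC region in the parameter `q`. -/
def EPCregion (R₀ u ε c q : ℝ) : Prop :=
  1 - 1 / R1 R₀ u ε q < c / (1 + q) ∧ c / (1 + q) < 1 - 1 / R₀

/-- The EFC region in the parameter `q`. -/
def EFCregion (R₀ u ε c q : ℝ) : Prop :=
  c / (1 + q) ≤ 1 - 1 / R1 R₀ u ε q

/-- The piecewise equilibrium prevalence as a function of `q`. -/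
noncomputable def Istar (R₀ u ε c q : ℝ) : ℝ :=
  if c / (1 + q) ≤ 1 - 1 / R1 R₀ u ε q then 1 - 1 / R1 R₀ u ε q
  else if c / (1 + q) < 1 - 1 / R₀ then c / (1 + q)
  else 1 - 1 / R₀

lemma R1pos (R₀ u ε q : ℝ) (hR₀ : 1 < R₀) (hu : 0 < u) (hε0 : 0 ≤ ε) (hε1 : ε < 1)
    (hq : 0 < q) : 0 < R1 R₀ u ε q := by
  unfold R1
  have h1 : (1 + ε * q) / (1 + q) ≤ 1 := by
    rw [div_le_one (by linarith)]; nlinarith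
  have h2 : (u / (1 + u)) * ((1 + ε * q) / (1 + q)) ≤ u / (1 + u) := by
    nlinarith [div_nonneg hu.le (by linarith : (0:ℝ) ≤ 1 + u)]
  have h3 : u / (1 + u) < 1 := by
    rw [div_lt_one (by linarith)]; linarith
  nlinarith

lemma R1mono (R₀ u ε q₁ q₂ : ℝ) (hR₀ : 1 < R₀) (hu : 0 < u) (hε0 : 0 ≤ ε) (hε1 : ε < 1)
    (hq₁ : 0 < q₁) (h12 : q₁ ≤ q₂) :
    R1 R₀ u ε q₁ ≤ R1 R₀ u ε q₂ := by
  unfold R1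
  have hfrac : (1 + ε * q₂) / (1 + q₂) ≤ (1 + ε * q₁) / (1 + q₁) := by
    rw [div_le_div_iff₀ (by linarith) (by linarith)]
    nlinarith
  have hupos : 0 ≤ u / (1 + u) := div_nonneg hu.le (by linarith)
  have h2 := mul_le_mul_of_nonneg_left hfrac hupos
  exact mul_le_mul_of_nonneg_right (by linarith) (by linarith)

lemma Imono (R₀ u ε q₁ q₂ : ℝ) (hR₀ : 1 < R₀) (hu : 0 < u) (hε0 : 0 ≤ ε) (hε1 : ε < 1)
    (hq₁ : 0 < q₁) (h12 : q₁ ≤ q₂) :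
    1 - 1 / R1 R₀ u ε q₁ ≤ 1 - 1 / R1 R₀ u ε q₂ := by
  have h1 := R1pos R₀ u ε q₁ hR₀ hu hε0 hε1 hq₁
  have h2 := R1mono R₀ u ε q₁ q₂ hR₀ hu hε0 hε1 hq₁ h12
  have := one_div_le_one_div_of_le h1 h2
  linarith

lemma cmono (c q₁ q₂ : ℝ) (hc : 0 < c) (hq₁ : 0 < q₁) (h12 : q₁ ≤ q₂) :
    c / (1 + q₂) ≤ c / (1 + q₁) :=
  div_le_div_of_nonneg_left hc.le (by linarith) (by linarith)

/-- The crossover point between the EPC and EFC regimes, where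
`c/(1+q) = 1 - 1/R₁(q)`, minimizes the piecewise equilibrium prevalence:
`I*(q)` is nonincreasing on the EPC region, nondecreasing on the EFC region,
and any crossover point `q*` is a global minimizer of `I*` on the union of the
EPC and EFC regions. -/
theorem stmt_14 (R₀ u ε c : ℝ) (hR₀ : 1 < R₀) (hu : 0 < u)
    (hε0 : 0 ≤ ε) (hε1 : ε < 1) (hc : 0 < c)
    (qstar : ℝ) (hqstar : 0 < qstar)
    (hcross : c / (1 + qstar) = 1 - 1 / R1 R₀ u ε qstar) :
    (∀ q₁ q₂ : ℝ, 0 < q₁ → q₁ < q₂ → EPCregion R₀ u ε c q₁ → EPCregion R₀ u ε c q₂ →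
      Istar R₀ u ε c q₂ ≤ Istar R₀ u ε c q₁) ∧
    (∀ q₁ q₂ : ℝ, 0 < q₁ → q₁ < q₂ → EFCregion R₀ u ε c q₁ → EFCregion R₀ u ε c q₂ →
      Istar R₀ u ε c q₁ ≤ Istar R₀ u ε c q₂) ∧
    (∀ q : ℝ, 0 < q → (EPCregion R₀ u ε c q ∨ EFCregion R₀ u ε c q) →
      Istar R₀ u ε c qstar ≤ Istar R₀ u ε c q) := by
  have hIEPC : ∀ q : ℝ, EPCregion R₀ u ε c q → Istar R₀ u ε c q = c / (1 + q) := by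
    intro q ⟨h1, h2⟩
    rw [Istar, if_neg (not_le.mpr h1), if_pos h2]
  have hIEFC : ∀ q : ℝ, EFCregion R₀ u ε c q → Istar R₀ u ε c q = 1 - 1 / R1 R₀ u ε q := by
    intro q h
    have h' : c / (1 + q) ≤ 1 - 1 / R1 R₀ u ε q := h
    rw [Istar, if_pos h']
  have hIq : Istar R₀ u ε c qstar = c / (1 + qstar) := by
    rw [Istar, if_pos hcross.le, ← hcross]
  refine ⟨?_, ?_, ?_⟩
  · intro q₁ q₂ hq₁ h12 hE1 hE2
    rw [hIEPC q₁ hE1, hIEPC q₂ hE2]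
    exact cmono c q₁ q₂ hc hq₁ h12.le
  · intro q₁ q₂ hq₁ h12 hE1 hE2
    rw [hIEFC q₁ hE1, hIEFC q₂ hE2]
    exact Imono R₀ u ε q₁ q₂ hR₀ hu hε0 hε1 hq₁ h12.le
  · intro q hq hE
    rcases hE with hE | hE
    · rw [hIEPC q hE]
      rcases le_total q qstar with h | h
      · rw [hIq]
        exact cmono c q qstar hc hq h
      · have := Imono R₀ u ε qstar q hR₀ hu hε0 hε1 hqstar h
        rw [hIq, hcross]
        linarith [hE.1]
    · rw [hIEFC q hE]
      rcases le_total q qstar with h | h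
      · rw [hIq]
        calc c / (1 + qstar) ≤ c / (1 + q) := cmono c q qstar hc hq h
          _ ≤ _ := hE
      · rw [hIq, hcross]
        exact Imono R₀ u ε qstar q hR₀ hu hε0 hε1 hqstar h
end

section
/- If c < 1 - (1+u)/R₀ (with R₀ > 1 + u), then for all q > 0 one has c/(1+q) < 1 - 1/R₁(q), i.e. the system lies in the Full Compliance region for every isolation-breaking rate q, so no interior optimal isolation duration exists. -/
/-! The reproduction number `R₁(q)` never drops below `R₀/(1+u)`, because the weight
`(1+εq)/(1+q)` is at most `1`; so `1 - 1/R₁(q) ≥ 1 - (1+u)/R₀ > c > c/(1+q)`. -/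

lemma add_mul_div_add_le_one {ε q : ℝ} (hε : ε ≤ 1) (hq : 0 ≤ q) :
    (1 + ε * q) / (1 + q) ≤ 1 := by
  rw [div_le_one (by linarith)]
  nlinarith

lemma one_div_add_le_one_sub_div_mul {u f : ℝ} (hu : 0 ≤ u) (hf : f ≤ 1) :
    1 / (1 + u) ≤ 1 - u / (1 + u) * f := by
  have hu1 : 0 < 1 + u := by linarith
  have : u / (1 + u) * f ≤ u / (1 + u) :=
    mul_le_of_le_one_right (div_nonneg hu hu1.le) hf
  have hsplit : 1 / (1 + u) = 1 - u / (1 + u) := by field_simp; ring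
  linarith

lemma one_sub_div_le_one_sub_one_div_mul {k A R : ℝ} (hk : 0 < k) (hR : 0 < R)
    (hA : 1 / k ≤ A) : 1 - k / R ≤ 1 - 1 / (A * R) := by
  have : 1 / (A * R) ≤ 1 / (1 / k * R) :=
    one_div_le_one_div_of_le (by positivity) (mul_le_mul_of_nonneg_right hA hR.le)
  rw [one_div_mul_eq_div, one_div_div] at this
  linarith

theorem stmt_15_general (R₀ u ε c : ℝ) (hu : 0 < u) (hε1 : ε ≤ 1)
    (hR₀ : 1 + u < R₀) (hc : 0 < c) (hcc : c < 1 - (1 + u) / R₀) :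
    ∀ q : ℝ, 0 < q →
      c / (1 + q) < 1 - 1 / ((1 - (u / (1 + u)) * ((1 + ε * q) / (1 + q))) * R₀) := by
  intro q hq
  have hR₁ : 1 / (1 + u) ≤ 1 - u / (1 + u) * ((1 + ε * q) / (1 + q)) :=
    one_div_add_le_one_sub_div_mul hu.le (add_mul_div_add_le_one hε1 hq.le)
  calc c / (1 + q) < c := div_lt_self hc (by linarith)
    _ < 1 - (1 + u) / R₀ := hcc
    _ ≤ _ := one_sub_div_le_one_sub_one_div_mul (by linarith) (by linarith) hR₁

/-- If `c < 1 - (1+u)/R₀` (with `R₀ > 1 + u`, `u > 0`, `ε ∈ [0,1]`, `c > 0`),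
then for all `q > 0` one has `c/(1+q) < 1 - 1/R₁(q)` where
`R₁(q) = (1 - (u/(1+u))(1+εq)/(1+q))·R₀`: the system lies in the Full
Compliance region for every isolation-breaking rate `q`. -/
theorem stmt_15 (R₀ u ε c : ℝ) (hu : 0 < u) (hε0 : 0 ≤ ε) (hε1 : ε ≤ 1)
    (hR₀ : 1 + u < R₀) (hc : 0 < c) (hcc : c < 1 - (1 + u) / R₀) :
    ∀ q : ℝ, 0 < q →
      c / (1 + q) < 1 - 1 / ((1 - (u / (1 + u)) * ((1 + ε * q) / (1 + q))) * R₀) :=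
  stmt_15_general R₀ u ε c hu hε1 hR₀ hc hcc
end

section
/- For the quartic factor of the characteristic polynomial at the EPC equilibrium, D(λ) = λ³ + a₂λ² + a₁λ + a₀ with a₂ = r - R + u + q + 2, a₁ = r·u·x* + (r - R)(u+q+2) + (1+u)(1+q), a₀ = r·u·x*·(1+εq) + (r - R)(1+u)(1+q), where r = R₀/R_{x*} and R = R_{x*}: if r ≥ R > 0, u, q > 0, x* ∈ (0,1), ε ∈ [0,1], then a₂ > 0, a₀ > 0, and a₂·a₁ > a₀, so all roots of D have negative real parts. -/
lemma cubic_hurwitz (a b c : ℝ) (ha : 0 < a) (hb : 0 < b) (hc : 0 < c)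
    (hab : c < a * b) (z : ℂ)
    (hz : z ^ 3 + (a : ℂ) * z ^ 2 + (b : ℂ) * z + (c : ℂ) = 0) : z.re < 0 := by
  by_contra h
  push_neg at h
  set s := z.re with hs
  set t := z.im with ht
  have hre : s ^ 3 - 3 * s * t ^ 2 + a * (s ^ 2 - t ^ 2) + b * s + c = 0 := by
    have := congrArg Complex.re hz
    simp [Complex.add_re, Complex.mul_re, Complex.mul_im, pow_succ, pow_zero, one_mul] at this
    ring_nf at this ⊢
    linarith [this]
  have him : t * (3 * s ^ 2 + 2 * a * s + b - t ^ 2) = 0 := by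
    have := congrArg Complex.im hz
    simp [Complex.add_im, Complex.mul_re, Complex.mul_im, pow_succ, pow_zero, one_mul] at this
    ring_nf at this ⊢
    linarith [this]
  rcases mul_eq_zero.mp him with h0 | h0
  · rw [h0] at hre
    nlinarith [pow_pos (lt_of_lt_of_le hc (by nlinarith : c ≤ c)) 1]
  · have ht2 : t ^ 2 = 3 * s ^ 2 + 2 * a * s + b := by linarith
    rw [ht2] at hre
    nlinarith [mul_nonneg (mul_nonneg h h) h, mul_nonneg ha.le (mul_nonneg h h),
      mul_nonneg (mul_nonneg ha.le ha.le) h, mul_nonneg hb.le h]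

/-- Routh–Hurwitz stability of the cubic factor of the characteristic polynomial
at the EPC equilibrium: with `r = R₀/R_{x*} ≥ R = R_{x*} > 0`, `u, q > 0`,
`x* ∈ (0,1)`, `ε ∈ [0,1]`, the coefficients `a₂ = r - R + u + q + 2`,
`a₁ = r u x* + (r - R)(u+q+2) + (1+u)(1+q)`,
`a₀ = r u x*(1+εq) + (r - R)(1+u)(1+q)` satisfy `a₂ > 0`, `a₀ > 0` and
`a₂·a₁ > a₀`, so all roots of `D(λ) = λ³ + a₂λ² + a₁λ + a₀` have negative real
parts. -/
theorem stmt_16 (r R u q x ε : ℝ) (hR : 0 < R) (hrR : R ≤ r)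
    (hu : 0 < u) (hq : 0 < q) (hx0 : 0 < x) (hx1 : x < 1)
    (hε0 : 0 ≤ ε) (hε1 : ε ≤ 1) :
    0 < r - R + u + q + 2 ∧
    0 < r * u * x * (1 + ε * q) + (r - R) * (1 + u) * (1 + q) ∧
    r * u * x * (1 + ε * q) + (r - R) * (1 + u) * (1 + q) <
      (r - R + u + q + 2) * (r * u * x + (r - R) * (u + q + 2) + (1 + u) * (1 + q)) ∧
    (∀ z : ℂ, z ^ 3 + ((r - R + u + q + 2 : ℝ) : ℂ) * z ^ 2 +
        ((r * u * x + (r - R) * (u + q + 2) + (1 + u) * (1 + q) : ℝ) : ℂ) * z +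
        ((r * u * x * (1 + ε * q) + (r - R) * (1 + u) * (1 + q) : ℝ) : ℂ) = 0 →
      z.re < 0) := by
  have hd : 0 ≤ r - R := by linarith
  have hr : 0 < r := lt_of_lt_of_le hR hrR
  have ha : 0 < r - R + u + q + 2 := by linarith
  have hb : 0 < r * u * x + (r - R) * (u + q + 2) + (1 + u) * (1 + q) := by
    have := mul_pos (mul_pos hr hu) hx0
    nlinarith
  have hc : 0 < r * u * x * (1 + ε * q) + (r - R) * (1 + u) * (1 + q) := by
    have h1 : 0 < r * u * x := mul_pos (mul_pos hr hu) hx0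
    have h2 : 0 < 1 + ε * q := by nlinarith
    nlinarith [mul_pos h1 h2, mul_nonneg (mul_nonneg hd (by linarith : (0:ℝ) ≤ 1 + u)) (by linarith : (0:ℝ) ≤ 1 + q)]
  have hab : r * u * x * (1 + ε * q) + (r - R) * (1 + u) * (1 + q) <
      (r - R + u + q + 2) * (r * u * x + (r - R) * (u + q + 2) + (1 + u) * (1 + q)) := by
    have h1 : 0 < r * u * x := mul_pos (mul_pos hr hu) hx0
    nlinarith [mul_nonneg hd hd, mul_nonneg (mul_nonneg hd hu.le) hq.le,
      mul_nonneg hd hu.le, mul_nonneg hd hq.le, mul_pos hu hq,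
      mul_nonneg h1.le (sub_nonneg.mpr hε1), mul_nonneg h1.le hu.le,
      mul_le_of_le_one_right hε0 hε1]
  exact ⟨ha, hc, hab, fun z hz => cubic_hurwitz _ _ _ ha hb hc hab z hz⟩
end
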